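/- Let r ≥ 0, 0 ≤ j ≤ r, and let f, f₁,…,f_r : ℝ → ℝ be continuous. Then ∫₀¹ f(t) · I(f₁,…,f_j)(0,t) · I(f_{j+1},…,f_r)(t,1) dt = I(f₁,…,f_j, f, f_{j+1},…,f_r)(0,1), where the right-hand side is the time-ordered iterated integral of the list obtained by inserting f between the j-th and (j+1)-st entries. -/

import Mathlib

/-! Induct on `B` from the right. Writing `B = B' ++ [g]`, the left-hand side becomes the integral
of `f(t) I(A)(s,t) g(u) I(B')(t,u)` over the triangle `s ≤ t ≤ u ≤ x`. Integrating in `t` first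
(Fubini) gives `∫ₛˣ g(u) · (the left-hand side for B' with endpoint u) du`, which by induction
is `∫ₛˣ g(u) I(A ++ f :: B')(s,u) du`, the recursive definition of `I(A ++ f :: B)(s,x)`. -/

noncomputable section

open intervalIntegral

/-- Auxiliary recursion (on the reversed list): `itRev [f_k, …, f₁] s t` is the
time-ordered iterated integral `I(f₁,…,f_k)(s,t)`. -/
noncomputable def itRev : List (ℝ → ℝ) → ℝ → ℝ → ℝ
  | [], _, _ => 1
  | f :: fs, s, t => ∫ u in s..t, f u * itRev fs s u

/-- The time-ordered iterated integral `I(f₁,…,f_r)(s,t)`, defined recursively by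
`I()(s,t) = 1` and `I(f₁,…,f_k)(s,t) = ∫_s^t f_k(u) · I(f₁,…,f_{k−1})(s,u) du`. -/
noncomputable def timeOrderedIntegral (fs : List (ℝ → ℝ)) (s t : ℝ) : ℝ :=
  itRev fs.reverse s t

open MeasureTheory Set

theorem timeOrderedIntegral_nil (s t : ℝ) : timeOrderedIntegral [] s t = 1 := rfl

theorem timeOrderedIntegral_concat (fs : List (ℝ → ℝ)) (g : ℝ → ℝ) (s t : ℝ) :
    timeOrderedIntegral (fs ++ [g]) s t = ∫ u in s..t, g u * timeOrderedIntegral fs s u := by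
  simp [timeOrderedIntegral, itRev]

theorem continuous_intervalIntegral_of_continuous_uncurry {X : Type*} [TopologicalSpace X]
    {f : X → ℝ → ℝ} (hf : Continuous f.uncurry) {a b : X → ℝ} (ha : Continuous a)
    (hb : Continuous b) : Continuous fun x ↦ ∫ t in a x..b x, f x t := by
  have hint : ∀ x c d, IntervalIntegrable (f x) volume c d := fun x c d ↦
    (hf.comp (continuous_const.prodMk continuous_id)).intervalIntegrable c d
  have hsplit : (fun x ↦ ∫ t in a x..b x, f x t) =
      fun x ↦ (∫ t in (0:ℝ)..b x, f x t) - ∫ t in (0:ℝ)..a x, f x t := by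
    funext x
    rw [integral_interval_sub_left (hint x _ _) (hint x _ _)]
  rw [hsplit]
  exact (continuous_parametric_intervalIntegral_of_continuous hf hb).sub
    (continuous_parametric_intervalIntegral_of_continuous hf ha)

theorem continuous_timeOrderedIntegral (fs : List (ℝ → ℝ)) (hfs : ∀ g ∈ fs, Continuous g) :
    Continuous fun p : ℝ × ℝ ↦ timeOrderedIntegral fs p.1 p.2 := by
  induction fs using List.reverseRecOn with
  | nil => simpa only [timeOrderedIntegral_nil] using continuous_const
  | append_singleton fs g ih =>
    have hg : Continuous g := hfs g (by simp)
    have hI := ih fun h hh ↦ hfs h (by simp [hh])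
    simp only [timeOrderedIntegral_concat]
    exact continuous_intervalIntegral_of_continuous_uncurry
      ((hg.comp continuous_snd).mul (hI.comp ((continuous_fst.comp continuous_fst).prodMk
        continuous_snd))) continuous_fst continuous_snd

theorem setIntegral_Ioc_indicator_Ici {g : ℝ → ℝ} {a b t : ℝ} (ht : t ∈ Ioc a b) :
    ∫ u in Ioc a b, (Ici t).indicator g u = ∫ u in t..b, g u := by
  have hset : Ioc a b ∩ Ici t = Icc t b := by
    ext u
    simp only [mem_inter_iff, mem_Ioc, mem_Ici, mem_Icc]
    constructor
    · rintro ⟨⟨-, hub⟩, htu⟩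
      exact ⟨htu, hub⟩
    · rintro ⟨htu, hub⟩
      exact ⟨⟨ht.1.trans_le htu, hub⟩, htu⟩
  rw [setIntegral_indicator measurableSet_Ici, hset, integral_Icc_eq_integral_Ioc,
    integral_of_le ht.2]

theorem setIntegral_Ioc_indicator_Iic {g : ℝ → ℝ} {a b u : ℝ} (hu : u ∈ Ioc a b) :
    ∫ t in Ioc a b, (Iic u).indicator g t = ∫ t in a..u, g t := by
  have hset : Ioc a b ∩ Iic u = Ioc a u := by
    ext t
    simp only [mem_inter_iff, mem_Ioc, mem_Iic]
    constructor
    · rintro ⟨⟨hat, -⟩, htu⟩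
      exact ⟨hat, htu⟩
    · rintro ⟨hat, htu⟩
      exact ⟨⟨hat, htu.trans hu.2⟩, htu⟩
  rw [setIntegral_indicator measurableSet_Iic, hset, integral_of_le hu.1.le]

theorem intervalIntegral_triangle_swap {φ : ℝ → ℝ → ℝ} (hφ : Continuous φ.uncurry)
    {a b : ℝ} (hab : a ≤ b) :
    (∫ t in a..b, ∫ u in t..b, φ t u) = ∫ u in a..b, ∫ t in a..u, φ t u := by
  set μ := volume.restrict (Ioc a b)
  let T : Set (ℝ × ℝ) := {p | p.1 ≤ p.2}
  have hφint : Integrable φ.uncurry (μ.prod μ) := by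
    rw [Measure.prod_restrict, ← Measure.volume_eq_prod]
    exact (hφ.continuousOn.integrableOn_compact (isCompact_Icc.prod isCompact_Icc)).mono_set
      (prod_mono Ioc_subset_Icc_self Ioc_subset_Icc_self)
  have hswap := integral_integral_swap (f := fun t u ↦ T.indicator φ.uncurry (t, u))
    (hφint.indicator (measurableSet_le measurable_fst measurable_snd))
  have hrow : ∀ t u, T.indicator φ.uncurry (t, u) = (Ici t).indicator (φ t) u := fun t u ↦ by
    simp [T, indicator_apply]
  have hcol : ∀ t u, T.indicator φ.uncurry (t, u) = (Iic u).indicator (φ · u) t := fun t u ↦ by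
    simp [T, indicator_apply]
  calc (∫ t in a..b, ∫ u in t..b, φ t u)
      = ∫ t in Ioc a b, ∫ u in Ioc a b, T.indicator φ.uncurry (t, u) := by
        rw [integral_of_le hab]
        refine setIntegral_congr_fun measurableSet_Ioc fun t ht ↦ ?_
        simp only [hrow, setIntegral_Ioc_indicator_Ici ht]
    _ = ∫ u in Ioc a b, ∫ t in Ioc a b, T.indicator φ.uncurry (t, u) := hswap
    _ = ∫ u in a..b, ∫ t in a..u, φ t u := by
        rw [integral_of_le hab]
        refine setIntegral_congr_fun measurableSet_Ioc fun u hu ↦ ?_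
        simp only [hcol, setIntegral_Ioc_indicator_Iic hu]

theorem integral_mul_timeOrderedIntegral_mul_timeOrderedIntegral {f : ℝ → ℝ} (hf : Continuous f)
    {A : List (ℝ → ℝ)} (hA : ∀ g ∈ A, Continuous g) (B : List (ℝ → ℝ))
    (hB : ∀ g ∈ B, Continuous g) {s x : ℝ} (hsx : s ≤ x) :
    (∫ t in s..x, f t * timeOrderedIntegral A s t * timeOrderedIntegral B t x) =
      timeOrderedIntegral (A ++ f :: B) s x := by
  induction B using List.reverseRecOn generalizing x with
  | nil =>
    simp only [timeOrderedIntegral_nil, mul_one, timeOrderedIntegral_concat]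
  | append_singleton B g ih =>
    have hg : Continuous g := hB g (by simp)
    have hB' : ∀ h ∈ B, Continuous h := fun h hh ↦ hB h (by simp [hh])
    set φ : ℝ → ℝ → ℝ := fun t u ↦
      f t * timeOrderedIntegral A s t * (g u * timeOrderedIntegral B t u)
    have hφ : Continuous φ.uncurry := by
      have hIA := continuous_timeOrderedIntegral A hA
      have hIB := continuous_timeOrderedIntegral B hB'
      unfold φ Function.uncurry
      fun_prop
    calc (∫ t in s..x, f t * timeOrderedIntegral A s t * timeOrderedIntegral (B ++ [g]) t x)
        = ∫ t in s..x, ∫ u in t..x, φ t u := by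
          simp only [timeOrderedIntegral_concat, ← intervalIntegral.integral_const_mul, φ]
      _ = ∫ u in s..x, ∫ t in s..u, φ t u := intervalIntegral_triangle_swap hφ hsx
      _ = ∫ u in s..x, g u * timeOrderedIntegral (A ++ f :: B) s u := by
          refine integral_congr fun u hu ↦ ?_
          rw [uIcc_of_le hsx] at hu
          rw [← ih hB' hu.1, ← intervalIntegral.integral_const_mul]
          refine integral_congr fun t _ ↦ ?_
          simp only [φ]
          ring
      _ = timeOrderedIntegral (A ++ f :: (B ++ [g])) s x := by
          rw [← List.cons_append, ← List.append_assoc, timeOrderedIntegral_concat]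

/-- For continuous `f` and continuous lists `A = (f₁,…,f_j)`,
`B = (f_{j+1},…,f_r)`:
`∫₀¹ f(t) · I(A)(0,t) · I(B)(t,1) dt = I(A ++ f :: B)(0,1)`,
the iterated integral of the list obtained by inserting `f` between `A` and `B`. -/
theorem statement11 (f : ℝ → ℝ) (A B : List (ℝ → ℝ))
    (hf : Continuous f) (hA : ∀ g ∈ A, Continuous g) (hB : ∀ g ∈ B, Continuous g) :
    (∫ t in (0:ℝ)..1, f t * timeOrderedIntegral A 0 t * timeOrderedIntegral B t 1) =
      timeOrderedIntegral (A ++ f :: B) 0 1 :=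
  integral_mul_timeOrderedIntegral_mul_timeOrderedIntegral hf hA B hB zero_le_one
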